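/- arXiv:1505.07819 — 2 statements merged into one kernel-verified Lean document; each statement's English description precedes it below -/
import Mathlib

section
/- Let G be a profinite group and M a G-lattice (a discrete G-module, finitely generated and free over Z). If 0 → C → P → M → 0 is a coflabby resolution of M (P a G-permutation module, C coflabby, meaning H^1(H,C) = 0 for all open subgroups H ≤ G), then the sequence splits if and only if M is an invertible G-module. -/
/-- A `G`-module is a permutation module if it has a `ℤ`-basis permuted by `G`. -/
def IsPermutationModule (G : Type*) [Group G] (M : Type*) [AddCommGroup M]
    [DistribMulAction G M] : Prop :=
  ∃ (ι : Type) (_ : Fintype ι) (b : Module.Basis ι ℤ M), ∀ (g : G) (i : ι), ∃ j, g • b i = b j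

/-- A `G`-module is invertible if it is a `G`-equivariant direct summand of a
permutation module `ℤ[ι]` for a finite `G`-set `ι`. -/
def IsInvertibleModule (G : Type*) [Group G] (M : Type*) [AddCommGroup M]
    [DistribMulAction G M] : Prop :=
  ∃ (ι : Type) (_ : Fintype ι) (σ : G →* Equiv.Perm ι)
    (i : M →+ (ι → ℤ)) (p : (ι → ℤ) →+ M),
    (∀ m, p (i m) = m) ∧
    (∀ (g : G) (m : M), i (g • m) = fun x => i m ((σ g)⁻¹ x)) ∧
    (∀ (g : G) (c : ι → ℤ), p (fun x => c ((σ g)⁻¹ x)) = g • p c)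

/-- Vanishing of continuous `H¹(H, C)`: every continuous crossed homomorphism is
principal (continuity with respect to the discrete topology on `C`). -/
def H1ContTrivial (G : Type*) [Group G] [TopologicalSpace G] (H : Subgroup G)
    (C : Type*) [AddCommGroup C] [DistribMulAction G C] : Prop :=
  ∀ f : H → C, (∀ g h : H, f (g * h) = f g + (g : G) • f h) →
    (∀ c : C, IsOpen {h : H | f h = c}) →
    ∃ c : C, ∀ h : H, f h = (h : G) • c - c

section aux
variable {G : Type*} [Group G] {P : Type*} [AddCommGroup P] [DistribMulAction G P]

lemma smul_zsmul' (g : G) (z : ℤ) (p : P) : g • (z • p) = z • (g • p) :=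
  map_zsmul (DistribMulAction.toAddMonoidHom P g) z p

lemma smul_sum' {ι : Type*} (g : G) (s : Finset ι) (v : ι → P) :
    g • (∑ x ∈ s, v x) = ∑ x ∈ s, g • v x :=
  map_sum (DistribMulAction.toAddMonoidHom P g) v s
end aux

theorem Equiv.Perm.inv_apply_self {α : Type*} (f : Equiv.Perm α) (x : α) : f⁻¹ (f x) = x :=
  f.symm_apply_apply x

theorem Equiv.Perm.apply_inv_self {α : Type*} (f : Equiv.Perm α) (x : α) : f (f⁻¹ x) = x :=
  f.apply_symm_apply x


lemma forward_invertible {G P M : Type*} [Group G] [AddCommGroup P] [AddCommGroup M]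
    [DistribMulAction G P] [DistribMulAction G M]
    (f : P →+ M) (hfG : ∀ (g : G) (p : P), f (g • p) = g • f p)
    (hP : IsPermutationModule G P)
    (s : M →+ P) (hs : ∀ m, f (s m) = m) (hsG : ∀ (g : G) (m : M), s (g • m) = g • s m) :
    IsInvertibleModule G M := by
  classical
  obtain ⟨κ, hκ, b, hb⟩ := hP
  choose τ hτ using hb
  have hbinj : Function.Injective b := b.injective
  have hτmul : ∀ g h i, τ (g * h) i = τ g (τ h i) := by
    intro g h i
    apply hbinj
    rw [← hτ, ← hτ, ← hτ, mul_smul]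
  have hτone : ∀ i, τ 1 i = i := by
    intro i; apply hbinj; rw [← hτ, one_smul]
  have hτinv : ∀ g i, τ g⁻¹ (τ g i) = i := by
    intro g i; rw [← hτmul, inv_mul_cancel, hτone]
  have hτinv' : ∀ g i, τ g (τ g⁻¹ i) = i := by
    intro g i; rw [← hτmul, mul_inv_cancel, hτone]
  refine ⟨κ, hκ,
    { toFun := fun g => ⟨τ g, τ g⁻¹, fun i => hτinv g i, fun i => hτinv' g i⟩
      map_one' := by ext i; exact hτone i
      map_mul' := by intro g h; ext i; exact hτmul g h i },
    { toFun := fun m x => b.repr (s m) x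
      map_zero' := by ext x; simp
      map_add' := by intro m n; ext x; simp },
    { toFun := fun c => f (∑ x, c x • b x)
      map_zero' := by simp
      map_add' := by
        intro c d
        rw [← map_add, ← Finset.sum_add_distrib]
        simp [add_smul] },
    ?_, ?_, ?_⟩
  · intro m
    simp only [AddMonoidHom.coe_mk, ZeroHom.coe_mk]
    rw [Module.Basis.sum_repr, hs]
  · intro g m
    funext x
    simp only [AddMonoidHom.coe_mk, ZeroHom.coe_mk]
    rw [hsG]
    -- (σ g)⁻¹ x = τ g⁻¹ x
    have hinv : ∀ (e : Equiv.Perm κ) (x), e⁻¹ x = e.symm x := fun e x => rfl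
    show b.repr (g • s m) x = b.repr (s m) (τ g⁻¹ x)
    conv_lhs => rw [← Module.Basis.sum_repr b (s m)]
    rw [smul_sum']
    have : ∀ y : κ, g • (b.repr (s m) y • b y) = b.repr (s m) (τ g⁻¹ (τ g y)) • b (τ g y) := by
      intro y; rw [smul_zsmul', hτ, hτinv]
    rw [Finset.sum_congr rfl fun y _ => this y]
    rw [show (∑ y, b.repr (s m) (τ g⁻¹ (τ g y)) • b (τ g y))
        = ∑ z, b.repr (s m) (τ g⁻¹ z) • b z from
      Equiv.sum_comp ⟨τ g, τ g⁻¹, fun i => hτinv g i, fun i => hτinv' g i⟩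
        (fun z => b.repr (s m) (τ g⁻¹ z) • b z)]
    rw [Module.Basis.repr_sum_self]
  · intro g c
    simp only [AddMonoidHom.coe_mk, ZeroHom.coe_mk]
    show f (∑ x, c (τ g⁻¹ x) • b x) = g • f (∑ x, c x • b x)
    rw [← hfG, smul_sum']
    congr 1
    rw [show (∑ x, g • (c x • b x)) = ∑ x, c x • b (τ g x) by
      exact Finset.sum_congr rfl fun y _ => by rw [smul_zsmul', hτ]]
    rw [← Equiv.sum_comp (⟨τ g, τ g⁻¹, fun i => hτinv g i, fun i => hτinv' g i⟩ : Equiv.Perm κ)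
        (fun x => c (τ g⁻¹ x) • b x)]
    exact Finset.sum_congr rfl fun y _ => by simp [hτinv]

lemma reverse_split {G : Type*} [Group G] [TopologicalSpace G] [IsTopologicalGroup G]
    {C P M : Type*} [AddCommGroup C] [AddCommGroup P] [AddCommGroup M]
    [DistribMulAction G C] [DistribMulAction G P] [DistribMulAction G M]
    (hdiscP : ∀ p : P, IsOpen {g : G | g • p = p})
    (hdiscM : ∀ m : M, IsOpen {g : G | g • m = m})
    (hfin : Module.Finite ℤ M)
    (ι : C →+ P) (f : P →+ M)
    (hιG : ∀ (g : G) (c : C), ι (g • c) = g • ι c)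
    (hfG : ∀ (g : G) (p : P), f (g • p) = g • f p)
    (hinj : Function.Injective ι) (hsurj : Function.Surjective f)
    (hexact : ∀ p : P, f p = 0 ↔ p ∈ Set.range ι)
    (hC : ∀ H : Subgroup G, IsOpen (H : Set G) → H1ContTrivial G H C)
    (hM : IsInvertibleModule G M) :
    ∃ s : M →+ P, (∀ m, f (s m) = m) ∧ ∀ (g : G) (m : M), s (g • m) = g • s m := by
  classical
  obtain ⟨κ, hκ, σ, im, pm, hpi, hiG, hpG⟩ := hM
  -- `N` : the kernel of the action of `G` on `M`, an open subgroup
  set N : Subgroup G :=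
    { carrier := {g : G | ∀ m : M, g • m = m}
      one_mem' := fun m => one_smul _ _
      mul_mem' := fun {a b} ha hb m => by rw [mul_smul, hb, ha]
      inv_mem' := fun {a} ha m => by
        calc a⁻¹ • m = a⁻¹ • (a • m) := by rw [ha]
        _ = m := inv_smul_smul a m } with hN
  have hNmem : ∀ n : G, n ∈ N ↔ ∀ m : M, n • m = m := fun n => Iff.rfl
  obtain ⟨Sgen, hSgen⟩ := hfin.fg_top
  have hNmem' : ∀ g : G, (∀ m ∈ Sgen, g • m = m) → ∀ m : M, g • m = m := by
    intro g hg m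
    have hm : m ∈ Submodule.span ℤ (Sgen : Set M) := by rw [hSgen]; trivial
    induction hm using Submodule.span_induction with
    | mem x hx => exact hg x hx
    | zero => exact smul_zero g
    | add x y _ _ hx hy => rw [smul_add, hx, hy]
    | smul z x _ hx => rw [smul_zsmul', hx]
  have hNopen : IsOpen (N : Set G) := by
    have : (N : Set G) = ⋂ m ∈ (Sgen : Set M), {g : G | g • m = m} := by
      ext g
      simp only [Set.mem_iInter, Set.mem_setOf_eq, SetLike.mem_coe, hNmem]
      exact ⟨fun h m _ => h m, fun h => hNmem' g (fun m hm => h m hm)⟩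
    rw [this]
    exact Set.Finite.isOpen_biInter (Sgen.finite_toSet) fun m _ => hdiscM m
  -- basis vectors of `ℤ^κ`
  set e : κ → (κ → ℤ) := fun x => Pi.single x 1 with he
  have hesingle : ∀ (g : G) (z : κ), (fun w => e z ((σ g)⁻¹ w)) = e (σ g z) := by
    intro g z
    funext w
    simp only [he, Pi.single_apply]
    congr 1
    simp only [eq_iff_iff]
    constructor
    · intro h; rw [← h, Equiv.Perm.apply_inv_self]
    · intro h; rw [h, Equiv.Perm.inv_apply_self]
  have hsmul_pe : ∀ (g : G) (z : κ), g • pm (e z) = pm (e (σ g z)) := by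
    intro g z
    rw [← hpG, hesingle]
  have hNpe : ∀ n ∈ N, ∀ z : κ, pm (e (σ n z)) = pm (e z) := by
    intro n hn z
    rw [← hsmul_pe, (hNmem n).1 hn]
  -- key: for each `y`, a lift of `pm (e y)` fixed by the stabilizer (mod N) of `y`
  have key : ∀ y : κ, ∃ q : P, f q = pm (e y) ∧
      ∀ h : G, (∃ n ∈ N, σ h y = σ n y) → h • q = q := by
    intro y
    set Sy : Subgroup G :=
      { carrier := {g : G | ∃ n ∈ N, σ g y = σ n y}
        one_mem' := ⟨1, N.one_mem, rfl⟩
        mul_mem' := by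
          rintro a b ⟨n, hn, han⟩ ⟨n', hn', hbn'⟩
          refine ⟨a * n' * a⁻¹ * n, ?_, ?_⟩
          · intro m
            rw [mul_smul, (hNmem n).1 hn m, mul_smul, mul_smul,
              (hNmem n').1 hn' (a⁻¹ • m), smul_inv_smul]
          · rw [map_mul, Equiv.Perm.mul_apply, hbn', map_mul, map_mul, map_mul,
              Equiv.Perm.mul_apply, Equiv.Perm.mul_apply, Equiv.Perm.mul_apply,
              ← han, map_inv, Equiv.Perm.inv_apply_self]
        inv_mem' := by
          rintro a ⟨n, hn, han⟩
          refine ⟨a⁻¹ * n⁻¹ * a, ?_, ?_⟩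
          · intro m
            rw [mul_smul, mul_smul, (hNmem n⁻¹).1 (N.inv_mem hn) (a • m), inv_smul_smul]
          · simp only [map_mul, map_inv, Equiv.Perm.mul_apply, han,
              Equiv.Perm.inv_apply_self]
        } with hSy
    have hSyle : N ≤ Sy := fun n hn => ⟨n, hn, rfl⟩
    have hSyopen : IsOpen (Sy : Set G) := Subgroup.isOpen_mono hSyle hNopen
    obtain ⟨q1, hq1⟩ := hsurj (pm (e y))
    have hker : ∀ h : Sy, ∃ c : C, ι c = (h : G) • q1 - q1 := by
      intro h
      obtain ⟨n, hn, hny⟩ := h.2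
      have h0 : f ((h : G) • q1 - q1) = 0 := by
        rw [map_sub, hfG, hq1, hsmul_pe, hny, hNpe n hn, sub_self]
      obtain ⟨c, hc⟩ := (hexact _).1 h0
      exact ⟨c, hc⟩
    choose cf hcf using hker
    have hcocycle : ∀ g h : Sy, cf (g * h) = cf g + (g : G) • cf h := by
      intro g h
      apply hinj
      rw [map_add, hcf, hιG, hcf, hcf, Subgroup.coe_mul, mul_smul, smul_sub]
      abel
    have hcont : ∀ c0 : C, IsOpen {h : Sy | cf h = c0} := by
      intro c0
      have hset : {h : Sy | cf h = c0} = Subtype.val ⁻¹' {g : G | g • q1 = q1 + ι c0} := by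
        ext h
        simp only [Set.mem_setOf_eq, Set.mem_preimage]
        constructor
        · intro hh
          have := hcf h
          rw [hh] at this
          rw [this]; abel
        · intro hh
          apply hinj
          rw [hcf, hh]; abel
      rw [hset]
      have hopen : IsOpen {g : G | g • q1 = q1 + ι c0} := by
        by_cases hne : ∃ g0 : G, g0 • q1 = q1 + ι c0
        · obtain ⟨g0, hg0⟩ := hne
          have hs2 : {g : G | g • q1 = q1 + ι c0} = (fun g => g0⁻¹ * g) ⁻¹' {g : G | g • q1 = q1} := by
            ext g
            simp only [Set.mem_setOf_eq, Set.mem_preimage, mul_smul]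
            constructor
            · intro hg; rw [hg, ← hg0, inv_smul_smul]
            · intro hg
              have : g0 • (g0⁻¹ • g • q1) = g0 • q1 := by rw [hg]
              rw [smul_inv_smul] at this
              rw [this, hg0]
          rw [hs2]
          exact (hdiscP q1).preimage (continuous_mul_left g0⁻¹)
        · have hs3 : {g : G | g • q1 = q1 + ι c0} = ∅ := by
            ext g
            simp only [Set.mem_setOf_eq, Set.mem_empty_iff_false, iff_false]
            exact fun hg => hne ⟨g, hg⟩
          rw [hs3]; exact isOpen_empty
      exact hopen.preimage continuous_subtype_val
    obtain ⟨c0, hc0⟩ := hC Sy hSyopen cf hcocycle hcont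
    refine ⟨q1 - ι c0, ?_, ?_⟩
    · rw [map_sub, hq1, (hexact _).2 ⟨c0, rfl⟩, sub_zero]
    · intro h hh
      have h2 : ι ((h : G) • c0 - c0) = h • q1 - q1 := by
        rw [← hc0 ⟨h, hh⟩, hcf]
      rw [map_sub, hιG] at h2
      have h3 : h • q1 = h • ι c0 - ι c0 + q1 := by rw [h2]; abel
      rw [smul_sub, h3]; abel
  choose F hF1 hF2 using key
  -- orbit representatives
  let sd : Setoid κ :=
    ⟨fun x z => ∃ g : G, σ g x = z,
     ⟨fun x => ⟨1, by simp⟩,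
      fun {x z} h => by
        obtain ⟨g, hg⟩ := h
        exact ⟨g⁻¹, by rw [← hg, map_inv, Equiv.Perm.inv_apply_self]⟩,
      fun {x z w} h h' => by
        obtain ⟨g, hg⟩ := h
        obtain ⟨g', hg'⟩ := h'
        exact ⟨g' * g, by rw [map_mul, Equiv.Perm.mul_apply, hg, hg']⟩⟩⟩
  let r : κ → κ := fun x => (Quotient.mk sd x).out
  have hrconst : ∀ (g : G) (x : κ), r (σ g x) = r x := by
    intro g x
    show (Quotient.mk sd (σ g x)).out = (Quotient.mk sd x).out
    congr 1
    exact Quotient.sound ⟨g⁻¹, by rw [map_inv, Equiv.Perm.inv_apply_self]⟩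
  have hrx : ∀ x : κ, ∃ g : G, σ g (r x) = x := by
    intro x
    exact Quotient.exact (Quotient.out_eq (Quotient.mk sd x))
  choose gx hgx using hrx
  set q : κ → P := fun x => gx x • F (r x) with hq
  have hqf : ∀ x, f (q x) = pm (e x) := by
    intro x
    show f (gx x • F (r x)) = pm (e x)
    rw [hfG, (hF1 (r x)), hsmul_pe, hgx]
  have hqequiv : ∀ (g : G) (x : κ), q (σ g x) = g • q x := by
    intro g x
    show gx (σ g x) • F (r (σ g x)) = g • (gx x • F (r x))
    rw [hrconst]
    have h1 : σ (gx (σ g x)) (r x) = σ g x := by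
      have := hgx (σ g x)
      rwa [hrconst] at this
    have hfix : ((gx (σ g x))⁻¹ * (g * gx x)) • F (r x) = F (r x) := by
      apply hF2
      refine ⟨1, N.one_mem, ?_⟩
      rw [map_one, Equiv.Perm.one_apply, map_mul, Equiv.Perm.mul_apply, map_mul,
        Equiv.Perm.mul_apply, hgx x, map_inv, Equiv.Perm.inv_def, Equiv.symm_apply_eq]
      exact h1.symm
    calc gx (σ g x) • F (r x)
        = gx (σ g x) • (((gx (σ g x))⁻¹ * (g * gx x)) • F (r x)) := by rw [hfix]
      _ = g • (gx x • F (r x)) := by rw [← mul_smul, ← mul_smul]; congr 1; group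
  refine ⟨{ toFun := fun m => ∑ x, im m x • q x
            map_zero' := by simp
            map_add' := by
              intro m n
              rw [← Finset.sum_add_distrib]
              exact Finset.sum_congr rfl fun x _ => by rw [map_add, Pi.add_apply, add_smul] },
    ?_, ?_⟩
  · intro m
    simp only [AddMonoidHom.coe_mk, ZeroHom.coe_mk]
    rw [map_sum]
    have h1 : ∀ x : κ, f (im m x • q x) = pm (Pi.single x (im m x)) := by
      intro x
      rw [AddMonoidHom.map_zsmul, hqf, ← AddMonoidHom.map_zsmul]
      congr 1
      funext w
      simp only [he, Pi.smul_apply, Pi.single_apply, smul_eq_mul, mul_ite, mul_one, mul_zero]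
    rw [Finset.sum_congr rfl fun x _ => h1 x, ← map_sum, Finset.univ_sum_single, hpi]
  · intro g m
    simp only [AddMonoidHom.coe_mk, ZeroHom.coe_mk]
    simp only [hiG g m]
    rw [smul_sum', ← Equiv.sum_comp (σ g) (fun x => im m ((σ g)⁻¹ x) • q x)]
    refine Finset.sum_congr rfl fun y _ => ?_
    simp only [Equiv.Perm.inv_apply_self]
    rw [hqequiv, smul_zsmul']

/-- a coflabby resolution `0 → C → P → M → 0` of a `G`-lattice `M`
(`P` a permutation module, `C` coflabby) splits if and only if `M` is invertible. -/
theorem coflabby_resolution_splits_iff_invertible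
    {G : Type*} [Group G] [TopologicalSpace G] [IsTopologicalGroup G]
    [CompactSpace G] [T2Space G] [TotallyDisconnectedSpace G]
    (C P M : Type*) [AddCommGroup C] [AddCommGroup P] [AddCommGroup M]
    [DistribMulAction G C] [DistribMulAction G P] [DistribMulAction G M]
    -- discreteness of the `G`-modules
    (hdiscC : ∀ c : C, IsOpen {g : G | g • c = c})
    (hdiscP : ∀ p : P, IsOpen {g : G | g • p = p})
    (hdiscM : ∀ m : M, IsOpen {g : G | g • m = m})
    -- `M` is a lattice
    (hfree : Module.Free ℤ M) (hfin : Module.Finite ℤ M)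
    -- the short exact sequence `0 → C → P → M → 0` of `G`-modules
    (ι : C →+ P) (f : P →+ M)
    (hιG : ∀ (g : G) (c : C), ι (g • c) = g • ι c)
    (hfG : ∀ (g : G) (p : P), f (g • p) = g • f p)
    (hinj : Function.Injective ι) (hsurj : Function.Surjective f)
    (hexact : ∀ p : P, f p = 0 ↔ p ∈ Set.range ι)
    -- `P` is a permutation module
    (hP : IsPermutationModule G P)
    -- `C` is coflabby
    (hC : ∀ H : Subgroup G, IsOpen (H : Set G) → H1ContTrivial G H C) :
    (∃ s : M →+ P, (∀ m, f (s m) = m) ∧ ∀ (g : G) (m : M), s (g • m) = g • s m) ↔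
      IsInvertibleModule G M := by
  constructor
  · rintro ⟨s, hs, hsG⟩
    exact forward_invertible f hfG hP s hs hsG
  · intro hM
    exact reverse_split hdiscP hdiscM hfin ι f hιG hfG hinj hsurj hexact hC hM
end

section
/- The exact sequence 0 → Z·x → P → Pic → 0 of W(A4)-modules (x = e_1+e_2+e_3+e_4+e_5+2e) splits: the W(A4)-linear map P → Z sending e to -2 and each e_i to 1 restricts to the identity on Z·x (identifying Z·x with Z via x ↦ 1). Consequently Pic is a direct summand of the permutation module P, i.e., Pic is an invertible W(A4)-module. -/
open Finset

/-!  Coordinates `(a, b₁, b₂, b₃, b₄)` on `Pic = ℤ⁵` correspond to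
`aℓ₀ - b₁ℓ₁ - b₂ℓ₂ - b₃ℓ₃ - b₄ℓ₄`.  -/

/-- The action of the simple reflections `σ₁, σ₂, σ₃, σ₄` of `W(A₄)` on `Pic`. -/
def sigmaPic (i : Fin 4) (v : Fin 5 → ℤ) : Fin 5 → ℤ :=
  if h : i.val < 3 then
    v ∘ Equiv.swap (⟨i.val + 1, by omega⟩ : Fin 5) ⟨i.val + 2, by omega⟩
  else
    ![2 * v 0 - v 1 - v 2 - v 3, v 0 - v 2 - v 3, v 0 - v 1 - v 3, v 0 - v 1 - v 2, v 4]

/-- The permutation action of `σᵢ` on `P = ℤ·e ⊕ ⊕ⱼ₌₁⁵ ℤ·eⱼ` (coordinate `0` is `e`):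
`σᵢ` swaps `eᵢ` and `eᵢ₊₁` and fixes the rest. -/
def sigmaP (i : Fin 4) (q : Fin 6 → ℤ) : Fin 6 → ℤ :=
  q ∘ Equiv.swap (⟨i.val + 1, by omega⟩ : Fin 6) ⟨i.val + 2, by omega⟩

/-- `h₁, …, h₄ = ℓ₀ - ℓᵢ` and `h₅ = 2ℓ₀ - ℓ₁ - ℓ₂ - ℓ₃ - ℓ₄`. -/
def hElt : Fin 5 → (Fin 5 → ℤ) :=
  ![![1, 1, 0, 0, 0], ![1, 0, 1, 0, 0], ![1, 0, 0, 1, 0], ![1, 0, 0, 0, 1],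
    ![2, 1, 1, 1, 1]]

/-- `ω = -3ℓ₀ + ℓ₁ + ℓ₂ + ℓ₃ + ℓ₄`. -/
def omegaS : Fin 5 → ℤ := ![-3, -1, -1, -1, -1]

/-- The map `f : P → Pic`, `e ↦ ω`, `eᵢ ↦ hᵢ`. -/
def fMap (q : Fin 6 → ℤ) : Fin 5 → ℤ :=
  q 0 • omegaS + ∑ i : Fin 5, q i.succ • hElt i

/-- `x = e₁ + e₂ + e₃ + e₄ + e₅ + 2e`. -/
def xElt : Fin 6 → ℤ := ![2, 1, 1, 1, 1, 1]

/-- The retraction `P → ℤ`, `e ↦ -2`, `eᵢ ↦ 1`. -/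
def sMap (q : Fin 6 → ℤ) : ℤ := -2 * q 0 + q 1 + q 2 + q 3 + q 4 + q 5

/-! `s` is `-3` times the `e`-coordinate plus the sum of all coordinates, and each `σᵢ`
permutes the coordinates of `P` fixing that of `e`, so `s` is `W(A₄)`-invariant; as
`s x = 1` it retracts `ℤ·x ↪ P`. Hence `ker s` is a `W(A₄)`-stable complement of `ℤ·x`,
which `f` maps isomorphically onto `Pic`; the inverse is an equivariant additive section
of `f`. -/

lemma sMap_xElt : sMap xElt = 1 := by
  decide

lemma sMap_add (q q' : Fin 6 → ℤ) : sMap (q + q') = sMap q + sMap q' := by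
  simp only [sMap, Pi.add_apply]
  ring

lemma sMap_eq_sum (q : Fin 6 → ℤ) : sMap q = -3 * q 0 + ∑ j, q j := by
  simp only [sMap, Fin.sum_univ_six]
  ring

lemma sigmaP_apply_zero (i : Fin 4) (q : Fin 6 → ℤ) : sigmaP i q 0 = q 0 := congrArg q <|
    Equiv.swap_apply_of_ne_of_ne (Fin.ne_of_val_ne (by simp)) (Fin.ne_of_val_ne (by simp))

lemma sMap_sigmaP (i : Fin 4) (q : Fin 6 → ℤ) : sMap (sigmaP i q) = sMap q := by
  rw [sMap_eq_sum, sMap_eq_sum, sigmaP_apply_zero, sigmaP]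
  exact congrArg _ (Equiv.sum_comp _ q)

/-- The section of `fMap` with image `ker sMap`. -/
def gSec (v : Fin 5 → ℤ) : Fin 6 → ℤ :=
  ![-3 * v 0 + v 1 + v 2 + v 3 + v 4, -v 0 + v 1, -v 0 + v 2, -v 0 + v 3, -v 0 + v 4,
    -2 * v 0 + v 1 + v 2 + v 3 + v 4]

lemma gSec_add (v v' : Fin 5 → ℤ) : gSec (v + v') = gSec v + gSec v' := by
  ext j
  fin_cases j <;> simp [gSec] <;> ring

lemma fMap_gSec (v : Fin 5 → ℤ) : fMap (gSec v) = v := by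
  ext k
  fin_cases k <;> simp [fMap, gSec, Fin.sum_univ_five, omegaS, hElt] <;> ring

lemma gSec_sigmaPic (i : Fin 4) (v : Fin 5 → ℤ) : gSec (sigmaPic i v) = sigmaP i (gSec v) := by
  ext j
  fin_cases i <;> fin_cases j <;>
    simp [gSec, sigmaPic, sigmaP, Equiv.swap_apply_of_ne_of_ne] <;> ring

/-- the exact sequence `0 → ℤ·x → P → Pic → 0` of `W(A₄)`-modules
splits: the `W(A₄)`-invariant functional `s : P → ℤ` (`e ↦ -2`, `eᵢ ↦ 1`) sends `x`
to `1`; consequently `Pic` is a direct summand of the permutation module `P`, i.e.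
an invertible `W(A₄)`-module. -/
theorem delPezzo5_sequence_splits :
    sMap xElt = 1 ∧
    (∀ q q' : Fin 6 → ℤ, sMap (q + q') = sMap q + sMap q') ∧
    (∀ (i : Fin 4) (q : Fin 6 → ℤ), sMap (sigmaP i q) = sMap q) ∧
    (∃ g : (Fin 5 → ℤ) → (Fin 6 → ℤ),
      (∀ v v' : Fin 5 → ℤ, g (v + v') = g v + g v') ∧
      (∀ v : Fin 5 → ℤ, fMap (g v) = v) ∧
      (∀ (i : Fin 4) (v : Fin 5 → ℤ), g (sigmaPic i v) = sigmaP i (g v))) :=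
  ⟨sMap_xElt, sMap_add, sMap_sigmaP, gSec, gSec_add, fMap_gSec, gSec_sigmaPic⟩
end
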